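/- Let ℰ be a non-abelian extension of 𝒜 by ℬ with two sections (𝔰₁,s₁) and (𝔰₂,s₂) of (𝔭,p), and let (ωⁱ,ϖⁱ,χⁱ,μⁱ,ρ_Bⁱ,ρ_Mⁱ) be the non-abelian 2-cocycles induced by (𝔰ᵢ,sᵢ) for i = 1,2. Then the two 2-cocycles are equivalent via the maps ζ(x) = 𝔰₁(x) − 𝔰₂(x) and η(v) = s₁(v) − s₂(v); in particular ϖ¹(x,v) − ϖ²(x,v) = ρ_M²(x)η(v) + ν_M(ζ(x))η(v) − μ²(v)ζ(x) − η(ρ(x)v) for all x ∈ A, v ∈ V. -/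
import Mathlib


universe u

section
variable (K : Type u) [Field K]

/-- A relative Rota-Baxter Lie algebra: a Lie algebra `A`, a representation `rep` of `A`
on `V`, and a relative Rota-Baxter operator `T : V → A`. -/
structure RelRB (A V : Type u) [AddCommGroup A] [Module K A]
    [AddCommGroup V] [Module K V] : Type u where
  br : A →ₗ[K] A →ₗ[K] A
  skew : ∀ x y, br x y + br y x = 0
  jacobi : ∀ x y z, br x (br y z) = br (br x y) z + br y (br x z)
  rep : A →ₗ[K] Module.End K V
  rep_br : ∀ x y, rep (br x y) = rep x * rep y - rep y * rep x
  T : V →ₗ[K] A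
  rb : ∀ u v, br (T u) (T v) = T (rep (T u) v - rep (T v) u)

variable {A V B M : Type u}
  [AddCommGroup A] [Module K A] [AddCommGroup V] [Module K V]
  [AddCommGroup B] [Module K B] [AddCommGroup M] [Module K M]

/-- A non-abelian 2-cocycle on `𝒜` with values in `ℬ`: identities (L1)-(L9). -/
def IsNACocycle (𝒜 : RelRB K A V) (ℬ : RelRB K B M)
    (ω : A → A → B) (ϖ : A → V → M) (χ : V → B)
    (μ : V → B → M) (ρB : A → B → B) (ρM : A → M → M) : Prop :=
  (∀ x y, ω x y + ω y x = 0) ∧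
  (∀ x y a, ρB x (ρB y a) - ρB y (ρB x a) - ρB (𝒜.br x y) a = ℬ.br (ω x y) a) ∧
  (∀ x y z, ρB x (ω y z) + ρB y (ω z x) + ρB z (ω x y)
      = ω (𝒜.br x y) z + ω (𝒜.br y z) x + ω (𝒜.br z x) y) ∧
  (∀ x y v, ϖ x (𝒜.rep y v) - ϖ y (𝒜.rep x v) - ϖ (𝒜.br x y) v
      = ρM y (ϖ x v) - ρM x (ϖ y v) - μ v (ω x y)) ∧
  (∀ x y m, ρM x (ρM y m) - ρM y (ρM x m) = ρM (𝒜.br x y) m + ℬ.rep (ω x y) m) ∧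
  (∀ x v a, ρM x (μ v a) - μ (𝒜.rep x v) a + ℬ.rep a (ϖ x v) = μ v (ρB x a)) ∧
  (∀ x a m, ρM x (ℬ.rep a m) - ℬ.rep a (ρM x m) = ℬ.rep (ρB x a) m) ∧
  (∀ v m, ρB (𝒜.T v) (ℬ.T m) + ℬ.br (χ v) (ℬ.T m)
      = ℬ.T (ρM (𝒜.T v) m + ℬ.rep (χ v) m + μ v (ℬ.T m))) ∧
  (∀ v₁ v₂, ρB (𝒜.T v₁) (χ v₂) - ρB (𝒜.T v₂) (χ v₁) + ℬ.br (χ v₁) (χ v₂)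
        + ω (𝒜.T v₁) (𝒜.T v₂)
      = ℬ.T (ϖ (𝒜.T v₁) v₂ - ϖ (𝒜.T v₂) v₁)
        + χ (𝒜.rep (𝒜.T v₁) v₂ - 𝒜.rep (𝒜.T v₂) v₁)
        + ℬ.T (μ v₁ (χ v₂) - μ v₂ (χ v₁)))
/-- Equivalence of non-abelian 2-cocycles via linear maps `ζ : A → B`, `η : V → M`:
equations (E1)-(E6). -/
def CocycleEquiv (𝒜 : RelRB K A V) (ℬ : RelRB K B M)
    (ω : A → A → B) (ϖ : A → V → M) (χ : V → B)
    (μ : V → B → M) (ρB : A → B → B) (ρM : A → M → M)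
    (ω' : A → A → B) (ϖ' : A → V → M) (χ' : V → B)
    (μ' : V → B → M) (ρB' : A → B → B) (ρM' : A → M → M)
    (ζ : A → B) (η : V → M) : Prop :=
  (∀ x y, ω x y - ω' x y
      = ρB' x (ζ y) - ρB' y (ζ x) - ζ (𝒜.br x y) + ℬ.br (ζ x) (ζ y)) ∧
  (∀ x a, ρB x a - ρB' x a = ℬ.br (ζ x) a) ∧
  (∀ x m, ρM x m - ρM' x m = ℬ.rep (ζ x) m) ∧
  (∀ v a, μ v a - μ' v a = - ℬ.rep a (η v)) ∧
  (∀ v, χ v - χ' v = ℬ.T (η v) - ζ (𝒜.T v)) ∧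
  (∀ x v, ϖ x v - ϖ' x v
      = ρM' x (η v) + ℬ.rep (ζ x) (η v) - μ' v (ζ x) - η (𝒜.rep x v))
/-- A non-abelian extension of `𝒜` by `ℬ`: a relative Rota-Baxter Lie algebra `ℰ`
together with a short exact sequence `0 → ℬ → ℰ → 𝒜 → 0` of relative Rota-Baxter Lie
algebras. -/
structure ExtData {Ah Vh : Type u} [AddCommGroup Ah] [Module K Ah]
    [AddCommGroup Vh] [Module K Vh]
    (𝒜 : RelRB K A V) (ℬ : RelRB K B M) (ℰ : RelRB K Ah Vh) : Type u where
  iB : B →ₗ[K] Ah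
  iM : M →ₗ[K] Vh
  pA : Ah →ₗ[K] A
  pV : Vh →ₗ[K] V
  iB_br : ∀ a b, iB (ℬ.br a b) = ℰ.br (iB a) (iB b)
  iB_T : ∀ m, iB (ℬ.T m) = ℰ.T (iM m)
  i_rep : ∀ a m, iM (ℬ.rep a m) = ℰ.rep (iB a) (iM m)
  pA_br : ∀ x y, pA (ℰ.br x y) = 𝒜.br (pA x) (pA y)
  p_T : ∀ vh, pA (ℰ.T vh) = 𝒜.T (pV vh)
  p_rep : ∀ x vh, pV (ℰ.rep x vh) = 𝒜.rep (pA x) (pV vh)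
  iB_inj : Function.Injective iB
  iM_inj : Function.Injective iM
  pA_surj : Function.Surjective pA
  pV_surj : Function.Surjective pV
  exactA : ∀ x, pA x = 0 ↔ x ∈ Set.range iB
  exactV : ∀ v, pV v = 0 ↔ v ∈ Set.range iM
/-- The non-abelian 2-cocycle induced by a section `(sA, sV)` of a non-abelian extension:
`iB (ω x y) = [sA x, sA y] - sA [x,y]`, `iM (ϖ x v) = ρ̂(sA x)(sV v) - sV (ρ(x)v)`,
`iB (χ v) = T̂(sV v) - sA (T v)`, `iM (μ v a) = -ρ̂(iB a)(sV v)`,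
`iB (ρB x a) = [sA x, iB a]`, `iM (ρM x m) = ρ̂(sA x)(iM m)`. -/
def InducedCocycle {Ah Vh : Type u} [AddCommGroup Ah] [Module K Ah]
    [AddCommGroup Vh] [Module K Vh]
    {𝒜 : RelRB K A V} {ℬ : RelRB K B M} {ℰ : RelRB K Ah Vh}
    (E : ExtData K 𝒜 ℬ ℰ) (sA : A →ₗ[K] Ah) (sV : V →ₗ[K] Vh)
    (ω : A → A → B) (ϖ : A → V → M) (χ : V → B)
    (μ : V → B → M) (ρB : A → B → B) (ρM : A → M → M) : Prop :=
  (∀ x y, E.iB (ω x y) = ℰ.br (sA x) (sA y) - sA (𝒜.br x y)) ∧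
  (∀ x v, E.iM (ϖ x v) = ℰ.rep (sA x) (sV v) - sV (𝒜.rep x v)) ∧
  (∀ v, E.iB (χ v) = ℰ.T (sV v) - sA (𝒜.T v)) ∧
  (∀ v a, E.iM (μ v a) = - ℰ.rep (E.iB a) (sV v)) ∧
  (∀ x a, E.iB (ρB x a) = ℰ.br (sA x) (E.iB a)) ∧
  (∀ x m, E.iM (ρM x m) = ℰ.rep (sA x) (E.iM m))
/-- the non-abelian 2-cocycles induced by two sections of the same
non-abelian extension are equivalent, via `ζ = 𝔰₁ - 𝔰₂` and `η = s₁ - s₂`. -/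
theorem cocycles_of_two_sections_equivalent {Ah Vh : Type u}
    [AddCommGroup Ah] [Module K Ah] [AddCommGroup Vh] [Module K Vh]
    (𝒜 : RelRB K A V) (ℬ : RelRB K B M) (ℰ : RelRB K Ah Vh)
    (E : ExtData K 𝒜 ℬ ℰ)
    (sA₁ : A →ₗ[K] Ah) (sV₁ : V →ₗ[K] Vh)
    (hsA₁ : ∀ x, E.pA (sA₁ x) = x) (hsV₁ : ∀ v, E.pV (sV₁ v) = v)
    (sA₂ : A →ₗ[K] Ah) (sV₂ : V →ₗ[K] Vh)
    (hsA₂ : ∀ x, E.pA (sA₂ x) = x) (hsV₂ : ∀ v, E.pV (sV₂ v) = v)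
    (ω₁ : A → A → B) (ϖ₁ : A → V → M) (χ₁ : V → B)
    (μ₁ : V → B → M) (ρB₁ : A → B → B) (ρM₁ : A → M → M)
    (h₁ : InducedCocycle K E sA₁ sV₁ ω₁ ϖ₁ χ₁ μ₁ ρB₁ ρM₁)
    (ω₂ : A → A → B) (ϖ₂ : A → V → M) (χ₂ : V → B)
    (μ₂ : V → B → M) (ρB₂ : A → B → B) (ρM₂ : A → M → M)
    (h₂ : InducedCocycle K E sA₂ sV₂ ω₂ ϖ₂ χ₂ μ₂ ρB₂ ρM₂)
    (ζ : A →ₗ[K] B) (η : V →ₗ[K] M)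
    (hζ : ∀ x, E.iB (ζ x) = sA₁ x - sA₂ x)
    (hη : ∀ v, E.iM (η v) = sV₁ v - sV₂ v) :
    CocycleEquiv K 𝒜 ℬ ω₁ ϖ₁ χ₁ μ₁ ρB₁ ρM₁ ω₂ ϖ₂ χ₂ μ₂ ρB₂ ρM₂
      (fun x => ζ x) (fun v => η v) := by
  obtain ⟨hω₁, hϖ₁, hχ₁, hμ₁, hρB₁, hρM₁⟩ := h₁
  obtain ⟨hω₂, hϖ₂, hχ₂, hμ₂, hρB₂, hρM₂⟩ := h₂
  refine ⟨?_, ?_, ?_, ?_, ?_, ?_⟩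
  · intro x y
    apply E.iB_inj
    simp only [map_sub, map_add, E.iB_br, hω₁, hω₂, hρB₂, hζ,
      LinearMap.map_sub, LinearMap.sub_apply]
    have hsk : ∀ a b : Ah, ℰ.br a b = - ℰ.br b a := fun a b =>
      eq_neg_of_add_eq_zero_left (ℰ.skew a b)
    rw [hsk (sA₂ y) (sA₁ x), hsk (sA₂ y) (sA₂ x)]
    try abel
  · intro x a
    apply E.iB_inj
    simp only [map_sub, E.iB_br, hρB₁, hρB₂, hζ,
      LinearMap.map_sub, LinearMap.sub_apply]
    try abel
  · intro x m
    apply E.iM_inj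
    simp only [map_sub, E.i_rep, hρM₁, hρM₂, hζ,
      LinearMap.map_sub, LinearMap.sub_apply]
    try abel
  · intro v a
    apply E.iM_inj
    simp only [map_sub, map_neg, E.i_rep, hμ₁, hμ₂, hη,
      LinearMap.map_sub, LinearMap.sub_apply]
    try abel
  · intro v
    apply E.iB_inj
    simp only [map_sub, E.iB_T, hχ₁, hχ₂, hζ, hη,
      LinearMap.map_sub]
    try abel
  · intro x v
    apply E.iM_inj
    simp only [map_sub, map_add, map_neg, E.i_rep, hϖ₁, hϖ₂, hρM₂, hμ₂, hζ, hη,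
      LinearMap.map_sub, LinearMap.sub_apply]
    try abel

end
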